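/- Let G = N ⋊ T with 𝒦_2 = Λ_1·I(T) = I(N)I(T) and 𝒦_3 = Λ_2·I(T) + Λ_1·I(T)^2. Then 𝒦_2/𝒦_3 ≅ (N/N_{(2)}) ⊗ (T/T_2), naturally, where N_{(2)} = [N,G] and T_2 = [T,T]; the isomorphism sends (nN_{(2)}) ⊗ (tT_2) to the class of (n−1)(t−1). -/

import Mathlib

/-!
Write every `g ∈ G` uniquely as `g = n t` with `n ∈ N`, `t ∈ T`, and let `ψ : ℤ[G] → A ⊗ Tb` be
the linear extension of `g ↦ α n ⊗ β t`. For `a ∈ N` one has `ψ ((a - 1) v) = α a ⊗ β̃ v`, where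
`β̃` extends `g ↦ β t` linearly and kills `(a - 1) v` and `I(T)²`; hence `ψ` vanishes on `𝒦₃` and
sends `(n - 1)(t - 1)` to `α n ⊗ β t`. Conversely, modulo `𝒦₃` the class of `(n - 1)(t - 1)` is
biadditive in `(n, t)` and vanishes for `n ∈ [N, G]` or `t ∈ [T, T]`, so it induces a map
`A ⊗ Tb → 𝒦₂/𝒦₃`. This map is onto because these products span `𝒦₂`, and `ψ` is a left inverse.
-/

open MonoidAlgebra TensorProduct

/-- The ℤ-submodule of `ℤ[G]` generated by the elements `h - 1`, `h ∈ H`. -/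
noncomputable def relAug (G : Type*) [Group G] (H : Subgroup G) :
    Submodule ℤ (MonoidAlgebra ℤ G) :=
  Submodule.span ℤ {x | ∃ h ∈ H, x = MonoidAlgebra.of ℤ G h - 1}

/-- The filtration ideal `I_𝒢^n(G) ⊆ ℤ[G]` associated to an N-series `Gs`. -/
noncomputable def nIdeal (G : Type*) [Group G] (Gs : ℕ → Subgroup G) (n : ℕ) :
    Submodule ℤ (MonoidAlgebra ℤ G) :=
  Submodule.span ℤ
    {x | ∃ l : List (ℕ × G), l ≠ [] ∧ (∀ p ∈ l, 1 ≤ p.1 ∧ p.2 ∈ Gs p.1) ∧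
      n ≤ (l.map Prod.fst).sum ∧
      x = (l.map fun p => MonoidAlgebra.of ℤ G p.2 - 1).prod}

/-- `𝒦₂ = Λ₁·I(T) = I(N)·I(T)`. -/
noncomputable def K2 (G : Type*) [Group G] (N T : Subgroup G) :
    Submodule ℤ (MonoidAlgebra ℤ G) :=
  relAug G N * relAug G T

/-- `𝒦₃ = Λ₂·I(T) + Λ₁·I(T)²`, with `Λ₂ = I_𝒩²(N)` for the N-series
`N_{(1)} = N`, `N_{(i+1)} = [N_{(i)}, G]`. -/
noncomputable def K3 (G : Type*) [Group G] (N T : Subgroup G) (Ns : ℕ → Subgroup G) :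
    Submodule ℤ (MonoidAlgebra ℤ G) :=
  nIdeal G Ns 2 * relAug G T ⊔ relAug G N * (relAug G T) ^ 2

section TensorLift

variable {N T A B M : Type*} [Group N] [Group T] [AddCommGroup A] [AddCommGroup B]
  [AddCommGroup M]

theorem apply_eq_of_apply_eq_of_ker_le {α : N → A} (hα : ∀ a b, α (a * b) = α a + α b) {ψ : N → M}
    (hψ : ∀ a b, ψ (a * b) = ψ a + ψ b) (hψα : ∀ a, α a = 0 → ψ a = 0) {a b : N}
    (hab : α a = α b) : ψ a = ψ b := by
  have hα1 : α 1 = 0 := by simpa using hα 1 1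
  have hker : α (a * b⁻¹) = 0 := by rw [hα, hab, ← hα, mul_inv_cancel, hα1]
  rw [← inv_mul_cancel_right a b, hψ, hψα _ hker, zero_add]

theorem exists_tensor_lift {α : N → A} (hα : ∀ a b, α (a * b) = α a + α b)
    (hαs : Function.Surjective α) {β : T → B} (hβ : ∀ a b, β (a * b) = β a + β b)
    (hβs : Function.Surjective β) (φ : N → T → M)
    (hφN : ∀ a b t, φ (a * b) t = φ a t + φ b t) (hφT : ∀ a t u, φ a (t * u) = φ a t + φ a u)
    (hφα : ∀ a t, α a = 0 → φ a t = 0) (hφβ : ∀ a t, β t = 0 → φ a t = 0) :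
    ∃ f : A ⊗[ℤ] B →ₗ[ℤ] M, ∀ a t, f (α a ⊗ₜ β t) = φ a t := by
  obtain ⟨s, hs⟩ := hαs.hasRightInverse
  obtain ⟨σ, hσ⟩ := hβs.hasRightInverse
  have hφα' : ∀ {a b} t, α a = α b → φ a t = φ b t := fun t =>
    apply_eq_of_apply_eq_of_ker_le hα (fun a b => hφN a b t) (fun a ha => hφα a t ha)
  have hφβ' : ∀ a {t u}, β t = β u → φ a t = φ a u := fun a =>
    apply_eq_of_apply_eq_of_ker_le hβ (hφT a) (hφβ a)
  let F : A →+ B →+ M := AddMonoidHom.mk' (fun x => AddMonoidHom.mk' (fun y => φ (s x) (σ y))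
      fun y y' => by rw [hφβ' _ (by rw [hβ, hσ, hσ, hσ] : β (σ (y + y')) = β (σ y * σ y')), hφT])
    fun x x' => by
      ext y
      simp only [AddMonoidHom.mk'_apply, AddMonoidHom.add_apply]
      rw [hφα' _ (by rw [hα, hs, hs, hs] : α (s (x + x')) = α (s x * s x')), hφN]
  refine ⟨(TensorProduct.liftAddHom F fun r x y => ?_).toIntLinearMap, fun a t => ?_⟩
  · rw [map_zsmul, map_zsmul, AddMonoidHom.zsmul_apply]
  · rw [AddMonoidHom.coe_toIntLinearMap, TensorProduct.liftAddHom_tmul]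
    exact (hφα' _ (hs (α a))).trans (hφβ' a (hσ (β t)))

end TensorLift

open scoped commutatorElement

section Augmentation

variable {G : Type*} [Group G]

theorem of_mul_sub_one (a b : G) :
    of ℤ G (a * b) - 1 =
      (of ℤ G a - 1) * (of ℤ G b - 1) + (of ℤ G a - 1) + (of ℤ G b - 1) := by
  rw [map_mul]; noncomm_ring

theorem sub_one_mem_relAug {H : Subgroup G} {h : G} (hh : h ∈ H) :
    of ℤ G h - 1 ∈ relAug G H :=
  Submodule.subset_span ⟨h, hh, rfl⟩

theorem sub_one_mul_sub_one_mem_relAug_sq {H : Subgroup G} {a b : G} (ha : a ∈ H) (hb : b ∈ H) :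
    (of ℤ G a - 1) * (of ℤ G b - 1) ∈ relAug G H ^ 2 := by
  rw [pow_two]; exact Submodule.mul_mem_mul (sub_one_mem_relAug ha) (sub_one_mem_relAug hb)

theorem mul_of_mem_relAug {H : Subgroup G} {x : MonoidAlgebra ℤ G} (hx : x ∈ relAug G H)
    {h : G} (hh : h ∈ H) : x * of ℤ G h ∈ relAug G H := by
  induction hx using Submodule.span_induction with
  | mem y hy =>
    obtain ⟨h', hh', rfl⟩ := hy
    have e : (of ℤ G h' - 1) * of ℤ G h = (of ℤ G (h' * h) - 1) - (of ℤ G h - 1) := by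
      rw [map_mul]; noncomm_ring
    rw [e]
    exact sub_mem (sub_one_mem_relAug (H.mul_mem hh' hh)) (sub_one_mem_relAug hh)
  | zero => simp
  | add x y _ _ hx hy => rw [add_mul]; exact add_mem hx hy
  | smul r x _ hx => rw [smul_mul_assoc]; exact Submodule.smul_mem _ r hx

theorem mul_of_mem_relAug_sq {H : Subgroup G} {x : MonoidAlgebra ℤ G}
    (hx : x ∈ relAug G H ^ 2) {h : G} (hh : h ∈ H) : x * of ℤ G h ∈ relAug G H ^ 2 := by
  rw [pow_two] at hx ⊢
  refine Submodule.mul_induction_on hx (fun y hy z hz => ?_) (fun y z hy hz => ?_)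
  · rw [mul_assoc]; exact Submodule.mul_mem_mul hy (mul_of_mem_relAug hz hh)
  · rw [add_mul]; exact add_mem hy hz

theorem commutator_sub_one_mem_relAug_sq {H : Subgroup G} {a b : G} (ha : a ∈ H) (hb : b ∈ H) :
    of ℤ G ⁅a, b⁆ - 1 ∈ relAug G H ^ 2 := by
  have e : of ℤ G ⁅a, b⁆ - 1 =
      ((of ℤ G a - 1) * (of ℤ G b - 1) - (of ℤ G b - 1) * (of ℤ G a - 1)) *
        of ℤ G (b * a)⁻¹ := by
    have hba : of ℤ G b * of ℤ G a * of ℤ G (b * a)⁻¹ = 1 := by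
      rw [← map_mul, ← map_mul, mul_inv_cancel, map_one]
    calc of ℤ G ⁅a, b⁆ - 1
        = of ℤ G a * of ℤ G b * of ℤ G (b * a)⁻¹ - of ℤ G b * of ℤ G a * of ℤ G (b * a)⁻¹ := by
          rw [hba, ← map_mul, ← map_mul, commutatorElement_def]; group
      _ = _ := by noncomm_ring
  rw [e]
  exact mul_of_mem_relAug_sq (sub_mem (sub_one_mul_sub_one_mem_relAug_sq ha hb)
    (sub_one_mul_sub_one_mem_relAug_sq hb ha)) (H.inv_mem (H.mul_mem hb ha))

theorem sub_one_mem_relAug_sq_of_mem_commutator {H : Subgroup G} {c : G} (hc : c ∈ ⁅H, H⁆) :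
    of ℤ G c - 1 ∈ relAug G H ^ 2 := by
  induction hc using Subgroup.closure_induction'' with
  | mem _ hx =>
    obtain ⟨a, ha, b, hb, rfl⟩ := hx
    exact commutator_sub_one_mem_relAug_sq ha hb
  | inv_mem _ hx =>
    obtain ⟨a, ha, b, hb, rfl⟩ := hx
    rw [commutatorElement_inv]
    exact commutator_sub_one_mem_relAug_sq hb ha
  | one => rw [map_one, sub_self]; exact zero_mem _
  | mul x y hx hy ihx ihy =>
    rw [of_mul_sub_one]
    exact add_mem (add_mem (sub_one_mul_sub_one_mem_relAug_sq (H.commutator_le_self hx)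
      (H.commutator_le_self hy)) ihx) ihy

theorem relAug_mul_relAug (H K : Subgroup G) :
    relAug G H * relAug G K =
      Submodule.span ℤ {x | ∃ h ∈ H, ∃ k ∈ K, x = (of ℤ G h - 1) * (of ℤ G k - 1)} := by
  rw [relAug, relAug, Submodule.span_mul_span]
  congr 1
  ext x
  simp only [Set.mem_mul, Set.mem_ofPred_eq]
  constructor
  · rintro ⟨_, ⟨h, hh, rfl⟩, _, ⟨k, hk, rfl⟩, rfl⟩
    exact ⟨h, hh, k, hk, rfl⟩
  · rintro ⟨h, hh, k, hk, rfl⟩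
    exact ⟨_, ⟨h, hh, rfl⟩, _, ⟨k, hk, rfl⟩, rfl⟩

end Augmentation

section Series

variable {G : Type*} [Group G] {N : Subgroup G} {Ns : ℕ → Subgroup G}

theorem normal_of_commutator_series [N.Normal] (hNs1 : Ns 1 = N)
    (hNsrec : ∀ i, 1 ≤ i → Ns (i + 1) = ⁅Ns i, (⊤ : Subgroup G)⁆) {i : ℕ} (hi : 1 ≤ i) :
    (Ns i).Normal := by
  induction i, hi using Nat.le_induction with
  | base => rw [hNs1]; infer_instance
  | succ i hi ih => rw [hNsrec i hi]; infer_instance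

theorem commutator_series_antitone [N.Normal] (hNs1 : Ns 1 = N)
    (hNsrec : ∀ i, 1 ≤ i → Ns (i + 1) = ⁅Ns i, (⊤ : Subgroup G)⁆) {i j : ℕ} (hi : 1 ≤ i)
    (hij : i ≤ j) : Ns j ≤ Ns i := by
  induction j, hij using Nat.le_induction with
  | base => exact le_rfl
  | succ j hij ih =>
    have := normal_of_commutator_series hNs1 hNsrec (hi.trans hij)
    rw [hNsrec j (hi.trans hij)]
    exact (Subgroup.commutator_le_left _ _).trans ih

theorem sub_one_mem_nIdeal {n k : ℕ} (hk : 1 ≤ k) (hnk : n ≤ k) {a : G} (ha : a ∈ Ns k) :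
    of ℤ G a - 1 ∈ nIdeal G Ns n :=
  Submodule.subset_span ⟨[(k, a)], List.cons_ne_nil _ _, by simpa using ⟨hk, ha⟩,
    by simpa using hnk, by simp⟩

theorem sub_one_mul_sub_one_mem_nIdeal {n k l : ℕ} (hk : 1 ≤ k) (hl : 1 ≤ l) (hn : n ≤ k + l)
    {a b : G} (ha : a ∈ Ns k) (hb : b ∈ Ns l) :
    (of ℤ G a - 1) * (of ℤ G b - 1) ∈ nIdeal G Ns n :=
  Submodule.subset_span ⟨[(k, a), (l, b)], List.cons_ne_nil _ _,
    by simpa using ⟨⟨hk, ha⟩, hl, hb⟩, by simpa using hn, by simp⟩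

end Series

section Coordinates

variable {G A B : Type*} [Group G] [AddCommGroup A] [AddCommGroup B] {N T : Subgroup G}
  (hc : N.IsComplement' T)

noncomputable def sndCoord (β : T → B) : MonoidAlgebra ℤ G →ₗ[ℤ] B :=
  (MonoidAlgebra.basis G ℤ).constr ℤ fun g => β (Subgroup.IsComplement.equiv hc g).2

noncomputable def tensorCoord (α : N → A) (β : T → B) : MonoidAlgebra ℤ G →ₗ[ℤ] A ⊗[ℤ] B :=
  (MonoidAlgebra.basis G ℤ).constr ℤ fun g =>
    α (Subgroup.IsComplement.equiv hc g).1 ⊗ₜ β (Subgroup.IsComplement.equiv hc g).2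

variable {hc}

@[simp]
theorem sndCoord_of (β : T → B) (g : G) :
    sndCoord hc β (of ℤ G g) = β (Subgroup.IsComplement.equiv hc g).2 := by
  rw [of_apply, ← MonoidAlgebra.basis_apply, sndCoord, Module.Basis.constr_basis]

@[simp]
theorem tensorCoord_of (α : N → A) (β : T → B) (g : G) :
    tensorCoord hc α β (of ℤ G g) =
      α (Subgroup.IsComplement.equiv hc g).1 ⊗ₜ β (Subgroup.IsComplement.equiv hc g).2 := by
  rw [of_apply, ← MonoidAlgebra.basis_apply, tensorCoord, Module.Basis.constr_basis]

theorem sndCoord_sub_one_mul (β : T → B) {a : G} (ha : a ∈ N) (v : MonoidAlgebra ℤ G) :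
    sndCoord hc β ((of ℤ G a - 1) * v) = 0 := by
  induction v using MonoidAlgebra.induction_on with
  | of g =>
    rw [sub_mul, one_mul, ← map_mul, map_sub, sndCoord_of, sndCoord_of,
      Subgroup.IsComplement.equiv_mul_left_of_mem hc ha, sub_self]
  | add x y hx hy => rw [mul_add, map_add, hx, hy, add_zero]
  | smul r x hx => rw [mul_smul_comm, map_smul, hx, smul_zero]

theorem tensorCoord_sub_one_mul {α : N → A} (hα : ∀ a b, α (a * b) = α a + α b) (β : T → B)
    {a : G} (ha : a ∈ N) (v : MonoidAlgebra ℤ G) :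
    tensorCoord hc α β ((of ℤ G a - 1) * v) = α ⟨a, ha⟩ ⊗ₜ sndCoord hc β v := by
  induction v using MonoidAlgebra.induction_on with
  | of g =>
    rw [sub_mul, one_mul, ← map_mul, map_sub, tensorCoord_of, tensorCoord_of, sndCoord_of,
      Subgroup.IsComplement.equiv_mul_left_of_mem hc ha, hα, add_tmul, add_sub_cancel_right]
  | add x y hx hy => rw [mul_add, map_add, hx, hy, map_add, tmul_add]
  | smul r x hx => rw [mul_smul_comm, map_smul, hx, map_smul, tmul_smul]

theorem sndCoord_sub_one {β : T → B} (hβ : ∀ a b, β (a * b) = β a + β b) {t : G} (ht : t ∈ T) :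
    sndCoord hc β (of ℤ G t - 1) = β ⟨t, ht⟩ := by
  have hβ1 : β 1 = 0 := by simpa using hβ 1 1
  rw [map_sub, ← map_one (of ℤ G), sndCoord_of, sndCoord_of,
    Subgroup.IsComplement.equiv_snd_eq_self_of_mem_of_one_mem hc N.one_mem ht,
    Subgroup.IsComplement.equiv_one hc N.one_mem T.one_mem]
  exact sub_eq_self.mpr hβ1

theorem relAug_sq_le_ker_sndCoord {β : T → B} (hβ : ∀ a b, β (a * b) = β a + β b) :
    relAug G T ^ 2 ≤ LinearMap.ker (sndCoord hc β) := by
  rw [pow_two, relAug_mul_relAug, Submodule.span_le]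
  rintro _ ⟨t, ht, u, hu, rfl⟩
  have e : (of ℤ G t - 1) * (of ℤ G u - 1) =
      (of ℤ G (t * u) - 1) - (of ℤ G t - 1) - (of ℤ G u - 1) := by
    rw [of_mul_sub_one]; abel
  rw [SetLike.mem_coe, LinearMap.mem_ker, e, map_sub, map_sub, sndCoord_sub_one hβ ht,
    sndCoord_sub_one hβ hu, sndCoord_sub_one hβ (T.mul_mem ht hu),
    show (⟨t * u, _⟩ : T) = ⟨t, ht⟩ * ⟨u, hu⟩ from rfl, hβ]
  abel

theorem tensorCoord_mul_eq_zero_of_mem_nIdeal {α : N → A}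
    (hα : ∀ a b, α (a * b) = α a + α b) (β : T → B) {Ns : ℕ → Subgroup G}
    (hNsN : ∀ k, 1 ≤ k → Ns k ≤ N) (hαNs : ∀ k, 2 ≤ k → ∀ a : N, (a : G) ∈ Ns k → α a = 0)
    {x : MonoidAlgebra ℤ G} (hx : x ∈ nIdeal G Ns 2) (w : MonoidAlgebra ℤ G) :
    tensorCoord hc α β (x * w) = 0 := by
  suffices nIdeal G Ns 2 ≤ LinearMap.ker (tensorCoord hc α β ∘ₗ LinearMap.mulRight ℤ w) from
    LinearMap.mem_ker.mp (this hx)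
  rw [nIdeal, Submodule.span_le]
  rintro _ ⟨l, hl, hmem, hsum, rfl⟩
  rw [SetLike.mem_coe, LinearMap.mem_ker, LinearMap.comp_apply, LinearMap.mulRight_apply]
  match l, hl with
  | [(k, a)], _ =>
    have hk := hmem (k, a) (List.mem_singleton_self _)
    have hk2 : 2 ≤ k := by simpa using hsum
    simp only [List.map_cons, List.map_nil, List.prod_cons, List.prod_nil, mul_one]
    rw [tensorCoord_sub_one_mul hα β (hNsN k hk.1 hk.2),
      hαNs k hk2 ⟨a, _⟩ hk.2, zero_tmul]
  | (k, a) :: (l, b) :: r, _ =>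
    have hk := hmem (k, a) List.mem_cons_self
    have hl := hmem (l, b) (List.mem_cons_of_mem _ List.mem_cons_self)
    simp only [List.map_cons, List.prod_cons]
    rw [mul_assoc, tensorCoord_sub_one_mul hα β (hNsN k hk.1 hk.2), mul_assoc,
      sndCoord_sub_one_mul β (hNsN l hl.1 hl.2), tmul_zero]

theorem tensorCoord_mul_eq_zero_of_mem_relAug_sq {α : N → A}
    (hα : ∀ a b, α (a * b) = α a + α b) {β : T → B} (hβ : ∀ a b, β (a * b) = β a + β b)
    {x w : MonoidAlgebra ℤ G} (hx : x ∈ relAug G N) (hw : w ∈ relAug G T ^ 2) :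
    tensorCoord hc α β (x * w) = 0 := by
  suffices relAug G N ≤ LinearMap.ker (tensorCoord hc α β ∘ₗ LinearMap.mulRight ℤ w) from
    LinearMap.mem_ker.mp (this hx)
  refine Submodule.span_le.mpr ?_
  rintro _ ⟨a, ha, rfl⟩
  rw [SetLike.mem_coe, LinearMap.mem_ker, LinearMap.comp_apply, LinearMap.mulRight_apply,
    tensorCoord_sub_one_mul hα β ha, relAug_sq_le_ker_sndCoord hβ hw, tmul_zero]

theorem K3_le_ker_tensorCoord {α : N → A} (hα : ∀ a b, α (a * b) = α a + α b)
    {β : T → B} (hβ : ∀ a b, β (a * b) = β a + β b) {Ns : ℕ → Subgroup G}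
    (hNsN : ∀ k, 1 ≤ k → Ns k ≤ N) (hαNs : ∀ k, 2 ≤ k → ∀ a : N, (a : G) ∈ Ns k → α a = 0) :
    K3 G N T Ns ≤ LinearMap.ker (tensorCoord hc α β) := by
  rw [K3]
  refine sup_le (Submodule.mul_le.mpr fun x hx w _ => ?_) (Submodule.mul_le.mpr fun x hx w hw => ?_)
  · exact LinearMap.mem_ker.mpr (tensorCoord_mul_eq_zero_of_mem_nIdeal hα β hNsN hαNs hx w)
  · exact LinearMap.mem_ker.mpr (tensorCoord_mul_eq_zero_of_mem_relAug_sq hα hβ hx hw)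

theorem tensorCoord_sub_one_mul_sub_one {α : N → A} (hα : ∀ a b, α (a * b) = α a + α b)
    {β : T → B} (hβ : ∀ a b, β (a * b) = β a + β b) (n : N) (t : T) :
    tensorCoord hc α β ((of ℤ G n - 1) * (of ℤ G t - 1)) = α n ⊗ₜ β t := by
  rw [tensorCoord_sub_one_mul hα β n.2, sndCoord_sub_one hβ t.2]

end Coordinates

section Quotient

variable {G : Type*} [Group G] {N T : Subgroup G} (Ns : ℕ → Subgroup G)

abbrev K2K3 (G : Type*) [Group G] (N T : Subgroup G) (Ns : ℕ → Subgroup G) : Type _ :=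
  ↥(K2 G N T) ⧸ (K3 G N T Ns).comap (K2 G N T).subtype

theorem sub_one_mul_sub_one_mem_K2 {n t : G} (hn : n ∈ N) (ht : t ∈ T) :
    (of ℤ G n - 1) * (of ℤ G t - 1) ∈ K2 G N T :=
  Submodule.mul_mem_mul (sub_one_mem_relAug hn) (sub_one_mem_relAug ht)

noncomputable def prodClass (n : N) (t : T) : K2K3 G N T Ns :=
  Submodule.Quotient.mk ⟨_, sub_one_mul_sub_one_mem_K2 n.2 t.2⟩

variable {Ns}

theorem prodClass_mul_left (hNs1 : Ns 1 = N) (n n' : N) (t : T) :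
    prodClass Ns (n * n') t = prodClass Ns n t + prodClass Ns n' t := by
  rw [prodClass, prodClass, prodClass, ← Submodule.Quotient.mk_add]
  refine (Submodule.Quotient.eq _).mpr (?_ : _ - _ ∈ K3 G N T Ns)
  have e : (of ℤ G ↑(n * n') - 1) * (of ℤ G t - 1) -
      ((of ℤ G n - 1) * (of ℤ G t - 1) + (of ℤ G n' - 1) * (of ℤ G t - 1)) =
      (of ℤ G n - 1) * (of ℤ G n' - 1) * (of ℤ G t - 1) := by
    rw [Subgroup.coe_mul, of_mul_sub_one]; noncomm_ring
  refine e ▸ Submodule.mem_sup_left (Submodule.mul_mem_mul ?_ (sub_one_mem_relAug t.2))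
  exact sub_one_mul_sub_one_mem_nIdeal le_rfl le_rfl le_rfl (hNs1 ▸ n.2) (hNs1 ▸ n'.2)

theorem prodClass_mul_right (n : N) (t t' : T) :
    prodClass Ns n (t * t') = prodClass Ns n t + prodClass Ns n t' := by
  rw [prodClass, prodClass, prodClass, ← Submodule.Quotient.mk_add]
  refine (Submodule.Quotient.eq _).mpr (?_ : _ - _ ∈ K3 G N T Ns)
  have e : (of ℤ G n - 1) * (of ℤ G ↑(t * t') - 1) -
      ((of ℤ G n - 1) * (of ℤ G t - 1) + (of ℤ G n - 1) * (of ℤ G t' - 1)) =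
      (of ℤ G n - 1) * ((of ℤ G t - 1) * (of ℤ G t' - 1)) := by
    rw [Subgroup.coe_mul, of_mul_sub_one]; noncomm_ring
  exact e ▸ Submodule.mem_sup_right (Submodule.mul_mem_mul (sub_one_mem_relAug n.2)
    (sub_one_mul_sub_one_mem_relAug_sq t.2 t'.2))

theorem prodClass_eq_zero_of_mem_left {n : N} (hn : (n : G) ∈ Ns 2) (t : T) :
    prodClass Ns n t = 0 :=
  (Submodule.Quotient.mk_eq_zero _).mpr <| Submodule.mem_sup_left <|
    Submodule.mul_mem_mul (sub_one_mem_nIdeal one_le_two le_rfl hn) (sub_one_mem_relAug t.2)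

theorem prodClass_eq_zero_of_mem_right (n : N) {t : T} (ht : (t : G) ∈ ⁅T, T⁆) :
    prodClass Ns n t = 0 :=
  (Submodule.Quotient.mk_eq_zero _).mpr <| Submodule.mem_sup_right <|
    Submodule.mul_mem_mul (sub_one_mem_relAug n.2) (sub_one_mem_relAug_sq_of_mem_commutator ht)

theorem span_range_prodClass :
    Submodule.span ℤ (Set.range fun p : N × T => prodClass Ns p.1 p.2) = ⊤ := by
  have hK2 := relAug_mul_relAug N T
  rw [← K2] at hK2
  refine Submodule.eq_top_iff'.mpr fun z => ?_
  obtain ⟨⟨x, hx⟩, rfl⟩ := Submodule.Quotient.mk_surjective _ z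
  have hx' := hx
  rw [hK2] at hx'
  induction hx' using Submodule.span_induction with
  | mem y hy =>
    obtain ⟨n, hn, t, ht, rfl⟩ := hy
    exact Submodule.subset_span ⟨(⟨n, hn⟩, ⟨t, ht⟩), rfl⟩
  | zero => exact zero_mem _
  | add y y' hy hy' ihy ihy' =>
    have h := add_mem (ihy (hK2 ▸ hy)) (ihy' (hK2 ▸ hy'))
    rwa [← Submodule.Quotient.mk_add] at h
  | smul r y hy ihy =>
    have h := Submodule.smul_mem _ r (ihy (hK2 ▸ hy))
    rwa [← Submodule.Quotient.mk_smul] at h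

end Quotient

/-- `A` realizes `N/N_{(2)} = N/[N,G]` via the surjection `α` with kernel `[N,G]`, and `Tb`
realizes `T/[T,T]` via `β`. -/
theorem stmt19 {G A Tb : Type*} [Group G] [AddCommGroup A] [AddCommGroup Tb]
    (N T : Subgroup G) [N.Normal] (hdisj : N ⊓ T = ⊥) (hjoin : N ⊔ T = ⊤)
    (Ns : ℕ → Subgroup G) (hNs1 : Ns 1 = N)
    (hNsrec : ∀ i, 1 ≤ i → Ns (i + 1) = ⁅Ns i, (⊤ : Subgroup G)⁆)
    (α : ↥N → A) (hαadd : ∀ a b : ↥N, α (a * b) = α a + α b)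
    (hαsurj : Function.Surjective α)
    (hαker : ∀ a : ↥N, α a = 0 ↔ (a : G) ∈ ⁅N, (⊤ : Subgroup G)⁆)
    (β : ↥T → Tb) (hβadd : ∀ a b : ↥T, β (a * b) = β a + β b)
    (hβsurj : Function.Surjective β)
    (hβker : ∀ t : ↥T, β t = 0 ↔ (t : G) ∈ ⁅T, T⁆) :
    ∃ e : (A ⊗[ℤ] Tb) ≃ₗ[ℤ]
        (↥(K2 G N T) ⧸ (K3 G N T Ns).comap (K2 G N T).subtype),
      ∀ (x : ↥N) (t : ↥T)
        (hm : (MonoidAlgebra.of ℤ G (x : G) - 1) * (MonoidAlgebra.of ℤ G (t : G) - 1) ∈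
          K2 G N T),
        e (α x ⊗ₜ[ℤ] β t) = Submodule.Quotient.mk
          (⟨(MonoidAlgebra.of ℤ G (x : G) - 1) * (MonoidAlgebra.of ℤ G (t : G) - 1), hm⟩ :
            ↥(K2 G N T)) := by
  have hc : N.IsComplement' T := Subgroup.isComplement'_of_disjoint_and_mul_eq_univ
    (disjoint_iff.mpr hdisj) (by rw [← Subgroup.normal_mul, hjoin, Subgroup.coe_top])
  have hNs2 : Ns 2 = ⁅N, ⊤⁆ := by rw [hNsrec 1 le_rfl, hNs1]
  have hNsN : ∀ k, 1 ≤ k → Ns k ≤ N := fun k hk =>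
    hNs1 ▸ commutator_series_antitone hNs1 hNsrec le_rfl hk
  have hαNs : ∀ k, 2 ≤ k → ∀ a : N, (a : G) ∈ Ns k → α a = 0 := fun k hk a ha =>
    (hαker a).mpr (hNs2 ▸ commutator_series_antitone hNs1 hNsrec one_le_two hk ha)
  obtain ⟨f, hf⟩ := exists_tensor_lift hαadd hαsurj hβadd hβsurj (prodClass Ns)
    (prodClass_mul_left hNs1) prodClass_mul_right
    (fun n t hn => prodClass_eq_zero_of_mem_left (hNs2 ▸ (hαker n).mp hn) t)
    (fun n t ht => prodClass_eq_zero_of_mem_right n ((hβker t).mp ht))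
  let g := ((K3 G N T Ns).comap (K2 G N T).subtype).liftQ
    (tensorCoord hc α β ∘ₗ (K2 G N T).subtype)
    fun _ hx => K3_le_ker_tensorCoord hαadd hβadd hNsN hαNs hx
  have hgf : g ∘ₗ f = LinearMap.id := TensorProduct.ext' fun a b => by
    obtain ⟨n, rfl⟩ := hαsurj a
    obtain ⟨t, rfl⟩ := hβsurj b
    show g (f (α n ⊗ₜ β t)) = α n ⊗ₜ β t
    rw [hf]
    exact tensorCoord_sub_one_mul_sub_one hαadd hβadd n t
  have hsurj : Function.Surjective f := by
    rw [← LinearMap.range_eq_top, eq_top_iff, ← span_range_prodClass, Submodule.span_le]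
    rintro _ ⟨⟨n, t⟩, rfl⟩
    exact ⟨_, hf n t⟩
  exact ⟨.ofBijective f ⟨Function.HasLeftInverse.injective ⟨g, LinearMap.congr_fun hgf⟩, hsurj⟩,
    fun x t _ => hf x t⟩
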